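/- arXiv:math/0603163 — 3 statements merged into one kernel-verified Lean document; each statement's English description precedes it below -/
import Mathlib

section
/- For vectors p, q ∈ ℝ² with |p| ≤ 1-ε and |q| ≤ 1-ε (where 0 < ε < 1), setting w_p = √(1-|p|²) and w_q = √(1-|q|²), there exists a constant C(ε) > 0 depending only on ε such that (p - q) · (p/w_p - q/w_q) ≥ C(ε) |p/w_p - q/w_q|². -/
/-!
With `a = (√(1 - ‖p‖²))⁻¹`, `b = (√(1 - ‖q‖²))⁻¹`, `u = a • p` and `v = b • q` we have
`‖u‖² = a² - 1`, `‖v‖² = b² - 1` and `⟪u, v⟫ ≤ a b`. These give the identity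
`2ab ⟪p - q, u - v⟫ = (a + b)(‖u - v‖² - (a - b)²)`, and Cauchy–Schwarz applied to
`(a² - b²)² = ⟪u - v, u + v⟫²` with `‖u + v‖² ≤ (a + b)² - 2` bounds `(a - b)²` away from
`‖u - v‖²`, so that `‖u - v‖² ≤ ab(a + b) ⟪p - q, u - v⟫`. On `‖p‖, ‖q‖ ≤ 1 - ε` both weights
are at most `d⁻¹` with `d = √(ε(2 - ε))`, whence the constant `d³ / 2`.
-/

open Real RealInnerProductSpace

theorem norm_le_one_of_sq_mul_one_sub_sq_eq_one {E : Type*} [NormedAddCommGroup E]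
    {p : E} {a : ℝ} (hpa : a ^ 2 * (1 - ‖p‖ ^ 2) = 1) : ‖p‖ ≤ 1 := by
  have : 0 < 1 - ‖p‖ ^ 2 := pos_of_mul_pos_right (by rw [hpa]; exact one_pos) (sq_nonneg a)
  nlinarith [norm_nonneg p]

theorem norm_smul_sub_smul_sq_le_mul_inner {E : Type*} [NormedAddCommGroup E]
    [InnerProductSpace ℝ E] {p q : E} {a b : ℝ} (ha : 0 < a) (hb : 0 < b)
    (hpa : a ^ 2 * (1 - ‖p‖ ^ 2) = 1) (hqb : b ^ 2 * (1 - ‖q‖ ^ 2) = 1) :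
    ‖a • p - b • q‖ ^ 2 ≤ a * b * (a + b) * ⟪p - q, a • p - b • q⟫ := by
  have hu : ‖a • p‖ ^ 2 = a ^ 2 - 1 := by
    rw [norm_smul, mul_pow, norm_eq_abs, sq_abs]; linarith
  have hv : ‖b • q‖ ^ 2 = b ^ 2 - 1 := by
    rw [norm_smul, mul_pow, norm_eq_abs, sq_abs]; linarith
  have hpq : ⟪p, q⟫ ≤ 1 :=
    (real_inner_le_norm p q).trans <| mul_le_one₀ (norm_le_one_of_sq_mul_one_sub_sq_eq_one hpa)
      (norm_nonneg q) (norm_le_one_of_sq_mul_one_sub_sq_eq_one hqb)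
  have huv : ⟪a • p, b • q⟫ ≤ a * b := by
    rw [real_inner_smul_left, real_inner_smul_right, ← mul_assoc]
    exact mul_le_of_le_one_right (by positivity) hpq
  have hinner : 2 * a * b * ⟪p - q, a • p - b • q⟫ =
      (a + b) * (‖a • p - b • q‖ ^ 2 - (a - b) ^ 2) := by
    rw [norm_sub_sq_real, hu, hv, inner_sub_left, inner_sub_right, inner_sub_right]
    simp only [real_inner_smul_left, real_inner_smul_right, real_inner_self_eq_norm_sq,
      real_inner_comm p q]
    linear_combination -2 * b * hpa - 2 * a * hqb
  have hcs : ((a - b) * (a + b)) ^ 2 ≤ ‖a • p - b • q‖ ^ 2 * ‖a • p + b • q‖ ^ 2 := by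
    have : (a - b) * (a + b) = ⟪a • p - b • q, a • p + b • q⟫ := by
      rw [inner_sub_left, inner_add_right, inner_add_right, real_inner_self_eq_norm_sq,
        real_inner_self_eq_norm_sq, real_inner_comm (a • p), hu, hv]
      ring
    rw [this, ← mul_pow, ← sq_abs]
    exact pow_le_pow_left₀ (abs_nonneg _) (abs_real_inner_le_norm _ _) 2
  have hsum : ‖a • p + b • q‖ ^ 2 ≤ (a + b) ^ 2 - 2 := by
    rw [norm_add_sq_real, hu, hv]; linarith
  nlinarith [mul_le_mul_of_nonneg_left hsum (sq_nonneg ‖a • p - b • q‖)]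

theorem mul_two_sub_le_one_sub_sq {ε x : ℝ} (hx0 : 0 ≤ x) (hx : x ≤ 1 - ε) :
    ε * (2 - ε) ≤ 1 - x ^ 2 := by
  nlinarith

theorem sq_inv_sqrt_mul_self {t : ℝ} (ht : 0 < t) : (√t)⁻¹ ^ 2 * t = 1 := by
  rw [inv_pow, sq_sqrt ht.le, inv_mul_cancel₀ ht.ne']

/-- Technical lemma (Lemma 1 of the paper). -/
theorem maximal_surface_technical_lemma (ε : ℝ) (hε0 : 0 < ε) (hε1 : ε < 1) :
    ∃ C : ℝ, 0 < C ∧ ∀ p q : EuclideanSpace ℝ (Fin 2),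
      ‖p‖ ≤ 1 - ε → ‖q‖ ≤ 1 - ε →
      (inner ℝ (p - q)
        ((Real.sqrt (1 - ‖p‖ ^ 2))⁻¹ • p - (Real.sqrt (1 - ‖q‖ ^ 2))⁻¹ • q) : ℝ) ≥
        C * ‖(Real.sqrt (1 - ‖p‖ ^ 2))⁻¹ • p - (Real.sqrt (1 - ‖q‖ ^ 2))⁻¹ • q‖ ^ 2 := by
  have hd : 0 < √(ε * (2 - ε)) := sqrt_pos.2 (by nlinarith)
  set d := √(ε * (2 - ε))
  refine ⟨d ^ 3 / 2, by positivity, fun p q hp hq => ?_⟩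
  have hwp : d ≤ √(1 - ‖p‖ ^ 2) := sqrt_le_sqrt (mul_two_sub_le_one_sub_sq (norm_nonneg p) hp)
  have hwq : d ≤ √(1 - ‖q‖ ^ 2) := sqrt_le_sqrt (mul_two_sub_le_one_sub_sq (norm_nonneg q) hq)
  set a := (√(1 - ‖p‖ ^ 2))⁻¹
  set b := (√(1 - ‖q‖ ^ 2))⁻¹
  have ha : 0 < a := inv_pos.2 (hd.trans_le hwp)
  have hb : 0 < b := inv_pos.2 (hd.trans_le hwq)
  have key := norm_smul_sub_smul_sq_le_mul_inner ha hb
    (sq_inv_sqrt_mul_self (sqrt_pos.1 (hd.trans_le hwp)))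
    (sq_inv_sqrt_mul_self (sqrt_pos.1 (hd.trans_le hwq)))
  have hab : a * b * (a + b) ≤ 2 / d ^ 3 := calc
    a * b * (a + b) ≤ d⁻¹ * d⁻¹ * (d⁻¹ + d⁻¹) := by
      gcongr <;> exact inv_anti₀ hd ‹_›
    _ = 2 / d ^ 3 := by field_simp; ring
  have hL : 0 ≤ ⟪p - q, a • p - b • q⟫ :=
    nonneg_of_mul_nonneg_right ((sq_nonneg _).trans key) (by positivity)
  calc d ^ 3 / 2 * ‖a • p - b • q‖ ^ 2
      ≤ d ^ 3 / 2 * (2 / d ^ 3 * ⟪p - q, a • p - b • q⟫) := by gcongr; exact key.trans (by gcongr)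
    _ = ⟪p - q, a • p - b • q⟫ := by field_simp
end

section
/- For vectors p, q ∈ ℝ² with |p| < 1 and |q| < 1, setting w_p = √(1-|p|²), w_q = √(1-|q|²), n = (-p₁/w_p, -p₂/w_p, 1/w_p) and n' = (-q₁/w_q, -q₂/w_q, 1/w_q) in ℝ³ with the Lorentzian inner product ⟨x,y⟩_L = x₁y₁ + x₂y₂ - x₃y₃, we have (p - q) · (p/w_p - q/w_q) = (w_p + w_q)(-1 - ⟨n, n'⟩_L). -/
/-- Euclidean pairing equals Lorentzian pairing of the unit normals. -/
theorem euclidean_pairing_eq_lorentz (p q : EuclideanSpace ℝ (Fin 2))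
    (hp : ‖p‖ < 1) (hq : ‖q‖ < 1) :
    let wp := Real.sqrt (1 - ‖p‖ ^ 2)
    let wq := Real.sqrt (1 - ‖q‖ ^ 2)
    let n : Fin 3 → ℝ := ![-(p 0) / wp, -(p 1) / wp, 1 / wp]
    let n' : Fin 3 → ℝ := ![-(q 0) / wq, -(q 1) / wq, 1 / wq]
    (inner ℝ (p - q) (wp⁻¹ • p - wq⁻¹ • q) : ℝ) =
      (wp + wq) * (-1 - (n 0 * n' 0 + n 1 * n' 1 - n 2 * n' 2)) := by
  intro wp wq n n'
  have hp2 : 1 - ‖p‖ ^ 2 > 0 := by nlinarith [norm_nonneg p]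
  have hq2 : 1 - ‖q‖ ^ 2 > 0 := by nlinarith [norm_nonneg q]
  have hwp : wp > 0 := Real.sqrt_pos.mpr hp2
  have hwq : wq > 0 := Real.sqrt_pos.mpr hq2
  have hwp2 : wp ^ 2 = 1 - ‖p‖ ^ 2 := Real.sq_sqrt hp2.le
  have hwq2 : wq ^ 2 = 1 - ‖q‖ ^ 2 := Real.sq_sqrt hq2.le
  have hnp : ‖p‖ ^ 2 = p 0 ^ 2 + p 1 ^ 2 := by
    rw [← real_inner_self_eq_norm_sq]
    simp only [PiLp.inner_apply, Fin.sum_univ_two, RCLike.inner_apply, conj_trivial]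
    ring
  have hnq : ‖q‖ ^ 2 = q 0 ^ 2 + q 1 ^ 2 := by
    rw [← real_inner_self_eq_norm_sq]
    simp only [PiLp.inner_apply, Fin.sum_univ_two, RCLike.inner_apply, conj_trivial]
    ring
  rw [hnp] at hwp2
  rw [hnq] at hwq2
  simp only [PiLp.inner_apply, Fin.sum_univ_two, PiLp.sub_apply, PiLp.smul_apply,
    smul_eq_mul, RCLike.inner_apply, conj_trivial, n, n']
  simp only [Matrix.cons_val_zero, Matrix.cons_val_one, Matrix.head_cons,
    Matrix.cons_val_two, Matrix.tail_cons]
  field_simp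
  nlinarith [mul_pos hwp hwq, sq_nonneg (wp*wq), hwp2, hwq2,
    mul_pos (mul_pos hwp hwq) (mul_pos hwp hwq)]
end

section
/- Let μ > 0, δ > 0, C > 0, r₀ > 0, and let η : [r₀, ∞) → ℝ be a continuous nonnegative function satisfying μ + C ∫_{r₀}^{r} η²(t)/(2πt) dt ≤ 2δ η(r) for all r ≥ r₀. Then no such η exists; i.e., the integral inequality leads to a contradiction (η must blow up before r₁ = r₀ exp(16πδ²/(μC)) while remaining finite and continuous). -/
/-!
A lower bound `η ≥ K` on `[s, ∞)` feeds back through the integral: over `[t e^{-L}, t]` with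
`L = 8πδ/(CK)` the integral of `η²/(2πt)` is at least `K²L/(2π)`, so `2δη(t) ≥ 4δK`, i.e.
`η ≥ 2K` on `[s e^L, ∞)`. Starting from `η ≥ μ/(2δ)` and doubling, the lengths `L` form a
geometric series, so all the thresholds stay below `r₀ exp (32πδ²/(μC))`, where `η` would have
to be infinite.
-/

open Real Set

section IntegralInequality

variable {η : ℝ → ℝ} {r₀ : ℝ}

theorem intervalIntegrable_sq_div_two_pi_mul (hr₀ : 0 < r₀) (hcont : ContinuousOn η (Ici r₀))
    {a b : ℝ} (ha : r₀ ≤ a) (hb : r₀ ≤ b) :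
    IntervalIntegrable (fun t => η t ^ 2 / (2 * π * t)) MeasureTheory.volume a b := by
  have hsub : uIcc a b ⊆ Ici r₀ := fun x hx => (le_min ha hb).trans hx.1
  refine ContinuousOn.intervalIntegrable ?_
  refine ((hcont.mono hsub).pow 2).div (continuousOn_const.mul continuousOn_id) fun x hx => ?_
  have : 0 < x := hr₀.trans_le (hsub hx)
  positivity

theorem integral_sq_div_two_pi_mul_nonneg (hr₀ : 0 < r₀) {r : ℝ} (hr : r₀ ≤ r) :
    0 ≤ ∫ t in r₀..r, η t ^ 2 / (2 * π * t) :=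
  intervalIntegral.integral_nonneg hr fun t ht => by
    have : 0 < t := hr₀.trans_le ht.1
    positivity

theorem integral_const_div_two_pi_mul_exp {r : ℝ} (hr : 0 < r) (A L : ℝ) :
    ∫ t in r..r * exp L, A / (2 * π * t) = A * L / (2 * π) := by
  have hrL : 0 < r * exp L := by positivity
  have h : ∀ t, A / (2 * π * t) = A / (2 * π) * t⁻¹ := fun t => by
    rw [← div_eq_mul_inv, div_div]
  simp_rw [h]
  rw [intervalIntegral.integral_const_mul, integral_inv_of_pos hr hrL,
    mul_div_cancel_left₀ _ hr.ne', log_exp]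
  field_simp

theorem le_integral_sq_div_two_pi_mul_exp {r K L : ℝ} (hr : 0 < r) (hK : 0 ≤ K) (hL : 0 ≤ L)
    (hint : IntervalIntegrable (fun t => η t ^ 2 / (2 * π * t)) MeasureTheory.volume r (r * exp L))
    (hlow : ∀ t ∈ Icc r (r * exp L), K ≤ η t) :
    K ^ 2 * L / (2 * π) ≤ ∫ t in r..r * exp L, η t ^ 2 / (2 * π * t) := by
  have hrL : r ≤ r * exp L := le_mul_of_one_le_right hr.le (one_le_exp hL)
  rw [← integral_const_div_two_pi_mul_exp hr]
  refine intervalIntegral.integral_mono_on hrL ?_ hint fun t ht => ?_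
  · refine ContinuousOn.intervalIntegrable
      (continuousOn_const.div (continuousOn_const.mul continuousOn_id) fun x hx => ?_)
    rw [uIcc_of_le hrL] at hx
    have : 0 < x := hr.trans_le hx.1
    positivity
  · have : 0 < t := hr.trans_le ht.1
    gcongr
    exact hlow t ht

variable {μ δ C : ℝ}

theorem le_of_integral_inequality (hδ : 0 < δ) (hC : 0 ≤ C) (hr₀ : 0 < r₀)
    (hineq : ∀ r ∈ Ici r₀,
      μ + C * ∫ t in r₀..r, (η t) ^ 2 / (2 * π * t) ≤ 2 * δ * η r) :
    ∀ r ∈ Ici r₀, μ / (2 * δ) ≤ η r := by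
  intro r hr
  have := mul_nonneg hC (integral_sq_div_two_pi_mul_nonneg (η := η) hr₀ hr)
  rw [div_le_iff₀' (by positivity)]
  linarith [hineq r hr]

theorem two_mul_le_of_integral_inequality (hμ : 0 ≤ μ) (hδ : 0 < δ) (hC : 0 < C) (hr₀ : 0 < r₀)
    (hcont : ContinuousOn η (Ici r₀))
    (hineq : ∀ r ∈ Ici r₀,
      μ + C * ∫ t in r₀..r, (η t) ^ 2 / (2 * π * t) ≤ 2 * δ * η r)
    {K s : ℝ} (hK : 0 < K) (hs : r₀ ≤ s) (hlow : ∀ t ∈ Ici s, K ≤ η t) :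
    ∀ t ∈ Ici (s * exp (8 * π * δ / (C * K))), 2 * K ≤ η t := by
  intro t ht
  set L := 8 * π * δ / (C * K)
  set r := t * exp (-L)
  have hL : 0 ≤ L := by positivity
  have hrt : r * exp L = t := by rw [mul_assoc, ← exp_add, neg_add_cancel, exp_zero, mul_one]
  have hsr : s ≤ r := by
    rw [← hrt] at ht
    exact le_of_mul_le_mul_right ht (exp_pos L)
  have hr₀r : r₀ ≤ r := hs.trans hsr
  have hrt_le : r ≤ t := hrt ▸ le_mul_of_one_le_right (hr₀.le.trans hr₀r) (one_le_exp hL)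
  have hr₀t : r₀ ≤ t := hr₀r.trans hrt_le
  have htail : K ^ 2 * L / (2 * π) ≤ ∫ u in r..t, η u ^ 2 / (2 * π * u) := by
    rw [← hrt]
    refine le_integral_sq_div_two_pi_mul_exp (hr₀.trans_le hr₀r) hK.le hL
      (intervalIntegrable_sq_div_two_pi_mul hr₀ hcont hr₀r (hrt ▸ hr₀t))
      fun u hu => hlow u (hsr.trans hu.1)
  have hwhole : ∫ u in r..t, η u ^ 2 / (2 * π * u) ≤ ∫ u in r₀..t, η u ^ 2 / (2 * π * u) :=
    intervalIntegral.integral_mono_interval hr₀r hrt_le le_rfl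
      (MeasureTheory.ae_restrict_of_forall_mem measurableSet_Ioc fun u hu => by
        have : 0 < u := hr₀.trans hu.1
        positivity)
      (intervalIntegrable_sq_div_two_pi_mul hr₀ hcont le_rfl hr₀t)
  have hgain : C * (K ^ 2 * L / (2 * π)) = 4 * δ * K := by
    simp only [L]
    field_simp
    ring
  have hdouble : 2 * δ * (2 * K) ≤ 2 * δ * η t :=
    calc 2 * δ * (2 * K) = C * (K ^ 2 * L / (2 * π)) := by rw [hgain]; ring
      _ ≤ C * ∫ u in r₀..t, η u ^ 2 / (2 * π * u) := by gcongr; exact htail.trans hwhole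
      _ ≤ μ + C * ∫ u in r₀..t, η u ^ 2 / (2 * π * u) := le_add_of_nonneg_left hμ
      _ ≤ 2 * δ * η t := hineq t hr₀t
  exact le_of_mul_le_mul_left hdouble (by positivity)

theorem pow_le_of_integral_inequality (hμ : 0 < μ) (hδ : 0 < δ) (hC : 0 < C) (hr₀ : 0 < r₀)
    (hcont : ContinuousOn η (Ici r₀))
    (hineq : ∀ r ∈ Ici r₀,
      μ + C * ∫ t in r₀..r, (η t) ^ 2 / (2 * π * t) ≤ 2 * δ * η r) (n : ℕ) :
    ∀ t ∈ Ici (r₀ * exp (16 * π * δ ^ 2 / (C * μ) * ∑ k ∈ Finset.range n, (1 / 2 : ℝ) ^ k)),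
      μ / (2 * δ) * 2 ^ n ≤ η t := by
  induction n with
  | zero => simpa using le_of_integral_inequality hδ hC.le hr₀ hineq
  | succ n ih =>
    have hs : r₀ ≤ r₀ * exp (16 * π * δ ^ 2 / (C * μ) * ∑ k ∈ Finset.range n, (1 / 2 : ℝ) ^ k) :=
      le_mul_of_one_le_right hr₀.le (one_le_exp (by positivity))
    have hstep := two_mul_le_of_integral_inequality hμ.le hδ hC hr₀ hcont hineq
      (by positivity) hs ih
    have hL : 8 * π * δ / (C * (μ / (2 * δ) * 2 ^ n)) =
        16 * π * δ ^ 2 / (C * μ) * (1 / 2) ^ n := by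
      rw [one_div_pow]
      field_simp
      ring
    rw [hL, mul_assoc, ← exp_add, ← mul_add, ← Finset.sum_range_succ] at hstep
    simpa [pow_succ, mul_assoc, mul_comm, mul_left_comm] using hstep

end IntegralInequality
theorem no_solution_of_integral_inequality_general (μ δ C r₀ : ℝ)
    (hμ : 0 < μ) (hδ : 0 < δ) (hC : 0 < C) (hr₀ : 0 < r₀)
    (η : ℝ → ℝ) (hcont : ContinuousOn η (Set.Ici r₀))
    (hineq : ∀ r ∈ Set.Ici r₀,
      μ + C * ∫ t in r₀..r, (η t) ^ 2 / (2 * Real.pi * t) ≤ 2 * δ * η r) :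
    False := by
  set c := 16 * π * δ ^ 2 / (C * μ)
  have hbound : ∀ n : ℕ, μ / (2 * δ) * 2 ^ n ≤ η (r₀ * exp (2 * c)) := fun n =>
    pow_le_of_integral_inequality hμ hδ hC hr₀ hcont hineq n _ <|
      mul_le_mul_of_nonneg_left
        (exp_le_exp.2 (by rw [mul_comm 2]; gcongr; exact sum_geometric_two_le n)) hr₀.le
  obtain ⟨n, hn⟩ := pow_unbounded_of_one_lt (η (r₀ * exp (2 * c)) / (μ / (2 * δ))) one_lt_two
  rw [div_lt_iff₀' (by positivity)] at hn
  exact (hbound n).not_gt hn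

/-- No continuous nonnegative η on [r₀,∞) can satisfy the integral
inequality μ + C ∫_{r₀}^r η²(t)/(2πt) dt ≤ 2δ η(r) for all r ≥ r₀. -/
theorem no_solution_of_integral_inequality (μ δ C r₀ : ℝ)
    (hμ : 0 < μ) (hδ : 0 < δ) (hC : 0 < C) (hr₀ : 0 < r₀)
    (η : ℝ → ℝ) (hcont : ContinuousOn η (Set.Ici r₀))
    (hnn : ∀ r ∈ Set.Ici r₀, 0 ≤ η r)
    (hineq : ∀ r ∈ Set.Ici r₀,
      μ + C * ∫ t in r₀..r, (η t) ^ 2 / (2 * Real.pi * t) ≤ 2 * δ * η r) :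
    False :=
  no_solution_of_integral_inequality_general μ δ C r₀ hμ hδ hC hr₀ η hcont hineq
end
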